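/- arXiv:2507.15237 — 6 statements merged into one kernel-verified Lean document; each statement's English description precedes it below -/
import Mathlib

section
/- Let n ≥ 1 and let A and B be n×n complex Hermitian matrices. Then for every integer k with 1 ≤ k ≤ n, the sum of the k smallest eigenvalues satisfies ∑_{j=1}^{k} λ_j(A+B) ≥ ∑_{j=1}^{k} (λ_j(A) + λ_j(B)). -/
/-!
Ky Fan's minimum principle: the sum of the `k` smallest eigenvalues of a Hermitian `M` is the
minimum of `Re tr (Vᴴ M V)` over isometries `V : ℂᵏ → ℂⁿ`. Choosing `V` optimal for `A + B`,
the trace splits into the traces for `A` and for `B`, each bounded below by its eigenvalue sum.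

For the lower bound, write `W = Uᴴ V` in an eigenbasis `U` of `M`; then
`Re tr (Vᴴ M V) = ∑ λᵢ cᵢ` with `cᵢ` the diagonal of the rank-`k` orthogonal projection `W Wᴴ`,
so `0 ≤ cᵢ ≤ 1` and `∑ cᵢ = k`, and such a weighted sum is least when the weight sits on the
`k` smallest `λᵢ`.
-/

/-- The eigenvalues of a Hermitian matrix, listed with multiplicity in
nondecreasing order: `sortedEigenvalues hA 0 ≤ ⋯ ≤ sortedEigenvalues hA (n-1)`. -/
noncomputable def sortedEigenvalues {n : ℕ} {A : Matrix (Fin n) (Fin n) ℂ}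
    (hA : A.IsHermitian) : Fin n → ℝ :=
  hA.eigenvalues ∘ Tuple.sort hA.eigenvalues

open Finset Matrix

theorem Fin.filter_val_lt_eq_map_castLEEmb {n k : ℕ} (hk : k ≤ n) :
    univ.filter (fun i : Fin n => (i : ℕ) < k) = univ.map (Fin.castLEEmb hk) := by
  ext i
  simp only [mem_filter, mem_univ, true_and, mem_map, Fin.castLEEmb_apply]
  exact ⟨fun h => ⟨⟨i, h⟩, rfl⟩, by rintro ⟨j, rfl⟩; exact j.2⟩

theorem sum_filter_val_lt_le_sum_mul {n k : ℕ} (hk1 : 1 ≤ k) (hk2 : k ≤ n) {μ c : Fin n → ℝ}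
    (hμ : Monotone μ) (hc0 : ∀ i, 0 ≤ c i) (hc1 : ∀ i, c i ≤ 1) (hc : ∑ i, c i = k) :
    ∑ i ∈ univ.filter (fun i : Fin n => (i : ℕ) < k), μ i ≤ ∑ i, μ i * c i := by
  set s := univ.filter (fun i : Fin n => (i : ℕ) < k)
  set t := μ ⟨k - 1, by omega⟩
  have hs : (#s : ℝ) = k := by simp [s, Fin.card_filter_val_lt, hk2]
  -- `t` separates the values of `μ` on `s` from those off `s`.
  have key (i : Fin n) : 0 ≤ (μ i - t) * (c i - if i ∈ s then 1 else 0) := by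
    by_cases hi : i ∈ s
    · have hik : (i : ℕ) < k := (mem_filter.1 hi).2
      have : μ i ≤ t := hμ (Fin.le_def.2 (show (i : ℕ) ≤ k - 1 by omega))
      rw [if_pos hi]
      exact mul_nonneg_of_nonpos_of_nonpos (by linarith) (by linarith [hc1 i])
    · have hik : ¬(i : ℕ) < k := fun h => hi (mem_filter.2 ⟨mem_univ i, h⟩)
      have : t ≤ μ i := hμ (Fin.le_def.2 (show k - 1 ≤ (i : ℕ) by omega))
      rw [if_neg hi]
      exact mul_nonneg (by linarith) (by linarith [hc0 i])
  calc ∑ i ∈ s, μ i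
      = ∑ i, μ i * c i - ∑ i, (μ i - t) * (c i - if i ∈ s then 1 else 0) := by
        simp only [mul_sub, sub_mul, sum_sub_distrib, ← mul_sum, mul_ite, mul_one, mul_zero,
          sum_ite_mem, univ_inter, sum_const, nsmul_eq_mul, hc, hs]
        ring
    _ ≤ ∑ i, μ i * c i := sub_le_self _ (sum_nonneg fun i _ => key i)

namespace Matrix

variable {𝕜 : Type*} [RCLike 𝕜] {l m : Type*} [Fintype l] [Fintype m]

theorem IsHermitian.re_apply_self_mem_Icc_of_isIdempotentElem {Q : Matrix m m 𝕜}
    (hQ : Q.IsHermitian) (hQQ : IsIdempotentElem Q) (i : m) :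
    RCLike.re (Q i i) ∈ Set.Icc 0 1 := by
  have hsum : RCLike.re (Q i i) = ∑ j, ‖Q i j‖ ^ 2 := by
    conv_lhs => rw [← hQQ, mul_apply]
    rw [map_sum]
    refine sum_congr rfl fun j _ => ?_
    rw [← hQ.apply j i, RCLike.star_def, RCLike.mul_conj, ← RCLike.ofReal_pow, RCLike.ofReal_re]
  have hsq : RCLike.re (Q i i) ^ 2 ≤ RCLike.re (Q i i) := calc
    RCLike.re (Q i i) ^ 2 ≤ ‖Q i i‖ ^ 2 :=
      sq_le_sq' (neg_le_of_abs_le (RCLike.abs_re_le_norm _)) (RCLike.re_le_norm _)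
    _ ≤ ∑ j, ‖Q i j‖ ^ 2 := single_le_sum (fun j _ => sq_nonneg ‖Q i j‖) (mem_univ i)
    _ = RCLike.re (Q i i) := hsum.symm
  have hnonneg : 0 ≤ RCLike.re (Q i i) := hsum ▸ sum_nonneg fun j _ => sq_nonneg _
  exact ⟨hnonneg, by nlinarith⟩

theorem isIdempotentElem_mul_conjTranspose_of_conjTranspose_mul_self_eq_one [DecidableEq l]
    {W : Matrix m l 𝕜} (hW : Wᴴ * W = 1) : IsIdempotentElem (W * Wᴴ) := by
  rw [IsIdempotentElem, Matrix.mul_assoc, ← Matrix.mul_assoc Wᴴ, hW, Matrix.one_mul]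

theorem trace_mul_conjTranspose_of_conjTranspose_mul_self_eq_one [DecidableEq l]
    {W : Matrix m l 𝕜} (hW : Wᴴ * W = 1) : (W * Wᴴ).trace = Fintype.card l := by
  rw [trace_mul_comm, hW, trace_one]

theorem re_trace_conjTranspose_mul_diagonal_mul [DecidableEq m] (W : Matrix m l 𝕜) (d : m → ℝ) :
    RCLike.re (Wᴴ * diagonal (fun i => (d i : 𝕜)) * W).trace
      = ∑ i, d i * RCLike.re ((W * Wᴴ) i i) := by
  rw [trace_mul_cycle, trace_mul_comm, trace, map_sum]
  simp only [diag_apply, diagonal_mul, RCLike.re_ofReal_mul]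

theorem conjTranspose_submatrix_mul_mul_submatrix {α l : Type*} [Star α] [Mul α]
    [AddCommMonoid α] (U : Matrix m m α) (X : Matrix m m α) (e : l → m) :
    (U.submatrix id e)ᴴ * X * U.submatrix id e = (Uᴴ * X * U).submatrix e e := by
  rw [submatrix_mul _ _ e id e Function.bijective_id,
    submatrix_mul _ _ e id id Function.bijective_id, conjTranspose_submatrix, submatrix_id_id]

theorem IsHermitian.conjTranspose_eigenvectorUnitary_mul_mul [DecidableEq m] {M : Matrix m m 𝕜}
    (hM : M.IsHermitian) :
    (hM.eigenvectorUnitary : Matrix m m 𝕜)ᴴ * M * hM.eigenvectorUnitary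
      = diagonal (fun i => (hM.eigenvalues i : 𝕜)) := by
  rw [← star_eq_conjTranspose, ← Unitary.conjStarAlgAut_star_apply (S := 𝕜),
    hM.conjStarAlgAut_star_eigenvectorUnitary]
  rfl

end Matrix

theorem sum_sortedEigenvalues_le_re_trace {n k : ℕ} (hk1 : 1 ≤ k) (hk2 : k ≤ n)
    {M : Matrix (Fin n) (Fin n) ℂ} (hM : M.IsHermitian) {V : Matrix (Fin n) (Fin k) ℂ}
    (hV : Vᴴ * V = 1) :
    ∑ j ∈ univ.filter (fun j : Fin n => (j : ℕ) < k), sortedEigenvalues hM j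
      ≤ (Vᴴ * M * V).trace.re := by
  set U : Matrix (Fin n) (Fin n) ℂ := ↑hM.eigenvectorUnitary
  set W := Uᴴ * V
  have hUU (X : Matrix (Fin n) (Fin k) ℂ) : U * (Uᴴ * X) = X := by
    rw [← Matrix.mul_assoc, ← star_eq_conjTranspose,
      Unitary.mul_star_self_of_mem hM.eigenvectorUnitary.2, Matrix.one_mul]
  have hW : Wᴴ * W = 1 := by
    simp only [W, conjTranspose_mul, conjTranspose_conjTranspose, Matrix.mul_assoc, hUU, hV]
  have hMV : Vᴴ * M * V = Wᴴ * (Uᴴ * M * U) * W := by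
    simp only [W, conjTranspose_mul, conjTranspose_conjTranspose, Matrix.mul_assoc, hUU]
  set c : Fin n → ℝ := fun i => ((W * Wᴴ) i i).re
  have hc := (isHermitian_mul_conjTranspose_self W).re_apply_self_mem_Icc_of_isIdempotentElem
    (isIdempotentElem_mul_conjTranspose_of_conjTranspose_mul_self_eq_one hW)
  have hc_sum : ∑ i, c i = k := by
    simpa [c, trace, Complex.re_sum] using
      congrArg Complex.re (trace_mul_conjTranspose_of_conjTranspose_mul_self_eq_one hW)
  set σ := Tuple.sort hM.eigenvalues
  calc ∑ j ∈ univ.filter (fun j : Fin n => (j : ℕ) < k), sortedEigenvalues hM j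
      ≤ ∑ i, sortedEigenvalues hM i * c (σ i) :=
        sum_filter_val_lt_le_sum_mul hk1 hk2 (Tuple.monotone_sort _) (fun i => (hc _).1)
          (fun i => (hc _).2) (by rw [Equiv.sum_comp σ c, hc_sum])
    _ = ∑ i, hM.eigenvalues i * c i := Equiv.sum_comp σ fun i => hM.eigenvalues i * c i
    _ = (Vᴴ * M * V).trace.re := by
        rw [hMV, hM.conjTranspose_eigenvectorUnitary_mul_mul]
        exact (re_trace_conjTranspose_mul_diagonal_mul W hM.eigenvalues).symm

theorem exists_re_trace_eq_sum_sortedEigenvalues {n k : ℕ} (hk : k ≤ n)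
    {M : Matrix (Fin n) (Fin n) ℂ} (hM : M.IsHermitian) :
    ∃ V : Matrix (Fin n) (Fin k) ℂ, Vᴴ * V = 1 ∧
      (Vᴴ * M * V).trace.re = ∑ j ∈ univ.filter (fun j : Fin n => (j : ℕ) < k),
        sortedEigenvalues hM j := by
  set U : Matrix (Fin n) (Fin n) ℂ := ↑hM.eigenvectorUnitary
  let e : Fin k ↪ Fin n := (Fin.castLEEmb hk).trans (Tuple.sort hM.eigenvalues).toEmbedding
  refine ⟨U.submatrix id e, ?_, ?_⟩
  · rw [← Matrix.mul_one (U.submatrix id e)ᴴ, conjTranspose_submatrix_mul_mul_submatrix,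
      Matrix.mul_one, ← star_eq_conjTranspose, Unitary.star_mul_self_of_mem hM.eigenvectorUnitary.2,
      submatrix_one_embedding]
  · rw [conjTranspose_submatrix_mul_mul_submatrix, hM.conjTranspose_eigenvectorUnitary_mul_mul,
      submatrix_diagonal_embedding, trace_diagonal, Complex.re_sum,
      Fin.filter_val_lt_eq_map_castLEEmb hk, sum_map]
    rfl

theorem sum_smallest_eigenvalues_add_ge_general {n : ℕ}
    (A B : Matrix (Fin n) (Fin n) ℂ) (hA : A.IsHermitian) (hB : B.IsHermitian)
    (k : ℕ) (hk1 : 1 ≤ k) (hk2 : k ≤ n) :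
    ∑ j ∈ Finset.univ.filter (fun j : Fin n => (j : ℕ) < k),
        sortedEigenvalues (hA.add hB) j ≥
      ∑ j ∈ Finset.univ.filter (fun j : Fin n => (j : ℕ) < k),
        (sortedEigenvalues hA j + sortedEigenvalues hB j) := by
  obtain ⟨V, hV, hAB⟩ := exists_re_trace_eq_sum_sortedEigenvalues hk2 (hA.add hB)
  rw [ge_iff_le, sum_add_distrib, ← hAB, Matrix.mul_add, Matrix.add_mul, trace_add, Complex.add_re]
  exact add_le_add (sum_sortedEigenvalues_le_re_trace hk1 hk2 hA hV)
    (sum_sortedEigenvalues_le_re_trace hk1 hk2 hB hV)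

/-- For Hermitian matrices `A`, `B`, the sum of the `k` smallest eigenvalues of `A + B`
is at least the sum of the `k` smallest eigenvalues of `A` plus that of `B`. -/
theorem sum_smallest_eigenvalues_add_ge {n : ℕ} (hn : 1 ≤ n)
    (A B : Matrix (Fin n) (Fin n) ℂ) (hA : A.IsHermitian) (hB : B.IsHermitian)
    (k : ℕ) (hk1 : 1 ≤ k) (hk2 : k ≤ n) :
    ∑ j ∈ Finset.univ.filter (fun j : Fin n => (j : ℕ) < k),
        sortedEigenvalues (hA.add hB) j ≥
      ∑ j ∈ Finset.univ.filter (fun j : Fin n => (j : ℕ) < k),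
        (sortedEigenvalues hA j + sortedEigenvalues hB j) :=
  sum_smallest_eigenvalues_add_ge_general A B hA hB k hk1 hk2
end

section
/- Let n ≥ 1 and let A and B be n×n complex Hermitian matrices. Then for every integer k with 1 ≤ k ≤ n, the sum of the k largest eigenvalues satisfies ∑_{j=n−k+1}^{n} λ_j(A+B) ≤ ∑_{j=n−k+1}^{n} (λ_j(A) + λ_j(B)). -/
open Matrix Finset

section WeightedSum

variable {ι : Type*} [Fintype ι] [DecidableEq ι]

theorem sum_mul_le_sum_of_threshold (S : Finset ι) (μ d : ι → ℝ) (t : ℝ)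
    (hS : ∀ p ∈ S, t ≤ μ p) (hSc : ∀ p ∉ S, μ p ≤ t)
    (hd0 : ∀ p, 0 ≤ d p) (hd1 : ∀ p, d p ≤ 1) (hsum : ∑ p, d p = #S) :
    ∑ p, d p * μ p ≤ ∑ p ∈ S, μ p := by
  have hin : ∀ p ∈ S, d p * μ p ≤ μ p - (1 - d p) * t := fun p hp => by
    nlinarith [hS p hp, hd1 p]
  have hout : ∀ p ∈ Sᶜ, d p * μ p ≤ d p * t := fun p hp =>
    mul_le_mul_of_nonneg_left (hSc p (mem_compl.1 hp)) (hd0 p)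
  calc ∑ p, d p * μ p = ∑ p ∈ S, d p * μ p + ∑ p ∈ Sᶜ, d p * μ p :=
        (sum_add_sum_compl S _).symm
    _ ≤ ∑ p ∈ S, (μ p - (1 - d p) * t) + ∑ p ∈ Sᶜ, d p * t :=
        add_le_add (sum_le_sum hin) (sum_le_sum hout)
    _ = ∑ p ∈ S, μ p + t * (∑ p, d p - #S) := by
        rw [← sum_add_sum_compl S d]
        simp only [sub_mul, one_mul, sum_sub_distrib, ← sum_mul, sum_const, nsmul_eq_mul]
        ring
    _ = ∑ p ∈ S, μ p := by rw [hsum, sub_self, mul_zero, add_zero]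

theorem sum_mul_le_sum_of_forall_le (S : Finset ι) (μ d : ι → ℝ)
    (hμ : ∀ p ∈ S, ∀ q ∉ S, μ q ≤ μ p)
    (hd0 : ∀ p, 0 ≤ d p) (hd1 : ∀ p, d p ≤ 1) (hsum : ∑ p, d p = #S) :
    ∑ p, d p * μ p ≤ ∑ p ∈ S, μ p := by
  rcases S.eq_empty_or_nonempty with rfl | hne
  · have hd : ∀ p, d p = 0 := fun p =>
      (sum_eq_zero_iff_of_nonneg fun p _ => hd0 p).1 (by simpa using hsum) p (mem_univ p)
    simp [hd]
  · obtain ⟨p₀, hp₀, hmin⟩ := S.exists_min_image μ hne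
    exact sum_mul_le_sum_of_threshold S μ d (μ p₀) hmin (hμ p₀ hp₀) hd0 hd1 hsum

end WeightedSum

section Unitary

variable {𝕜 ι : Type*} [RCLike 𝕜] [Fintype ι] [DecidableEq ι]

theorem sum_norm_sq_row_eq_one {U : Matrix ι ι 𝕜} (hU : U ∈ unitaryGroup ι 𝕜) (i : ι) :
    ∑ j, ‖U i j‖ ^ 2 = 1 := by
  have h := congr_fun (congr_fun (mem_unitaryGroup_iff.1 hU) i) i
  simp only [mul_apply, star_apply, RCLike.star_def, RCLike.mul_conj, one_apply_eq] at h
  exact_mod_cast h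

theorem sum_norm_sq_col_eq_one {U : Matrix ι ι 𝕜} (hU : U ∈ unitaryGroup ι 𝕜) (j : ι) :
    ∑ i, ‖U i j‖ ^ 2 = 1 := by
  have h := congr_fun (congr_fun (mem_unitaryGroup_iff'.1 hU) j) j
  simp only [mul_apply, star_apply, RCLike.star_def, RCLike.conj_mul, one_apply_eq] at h
  exact_mod_cast h

theorem re_conjTranspose_mul_diagonal_mul_apply_self (W : Matrix ι ι 𝕜) (μ : ι → ℝ) (i : ι) :
    RCLike.re ((Wᴴ * diagonal (RCLike.ofReal ∘ μ) * W : Matrix ι ι 𝕜) i i) = ∑ m, μ m * ‖W m i‖ ^ 2 := by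
  rw [mul_apply, map_sum]
  simp only [mul_diagonal, conjTranspose_apply, RCLike.star_def, Function.comp_apply]
  refine sum_congr rfl fun m _ => ?_
  rw [mul_right_comm, RCLike.conj_mul, ← RCLike.ofReal_pow, ← RCLike.ofReal_mul, RCLike.ofReal_re,
    mul_comm]

end Unitary

section KyFan

variable {𝕜 ι : Type*} [RCLike 𝕜] [Fintype ι] [DecidableEq ι]

theorem sum_re_conj_apply_self_le_sum_eigenvalues {A : Matrix ι ι 𝕜} (hA : A.IsHermitian)
    {V : Matrix ι ι 𝕜} (hV : V ∈ unitaryGroup ι 𝕜) {S T : Finset ι}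
    (hS : ∀ p ∈ S, ∀ q ∉ S, hA.eigenvalues q ≤ hA.eigenvalues p) (hcard : #T = #S) :
    ∑ i ∈ T, RCLike.re ((Vᴴ * A * V) i i) ≤ ∑ i ∈ S, hA.eigenvalues i := by
  set W := (hA.eigenvectorUnitary : Matrix ι ι 𝕜)ᴴ * V
  have hW : W ∈ unitaryGroup ι 𝕜 := mul_mem (star hA.eigenvectorUnitary).2 hV
  have hconj : Vᴴ * A * V = Wᴴ * diagonal (RCLike.ofReal ∘ hA.eigenvalues) * W := by
    conv_lhs => rw [hA.spectral_theorem, Unitary.conjStarAlgAut_apply]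
    simp only [W, conjTranspose_mul, conjTranspose_conjTranspose, star_eq_conjTranspose,
      Matrix.mul_assoc]
  set d : ι → ℝ := fun m => ∑ i ∈ T, ‖W m i‖ ^ 2
  have hd0 : ∀ m, 0 ≤ d m := fun m => sum_nonneg fun i _ => by positivity
  have hd1 : ∀ m, d m ≤ 1 := fun m =>
    (sum_le_univ_sum_of_nonneg fun i => by positivity).trans (sum_norm_sq_row_eq_one hW m).le
  have hsum : ∑ m, d m = #S := by
    rw [sum_comm, ← hcard, card_eq_sum_ones, Nat.cast_sum, Nat.cast_one]
    exact sum_congr rfl fun i _ => sum_norm_sq_col_eq_one hW i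
  calc ∑ i ∈ T, RCLike.re ((Vᴴ * A * V) i i)
      = ∑ i ∈ T, ∑ m, hA.eigenvalues m * ‖W m i‖ ^ 2 := by
        simp only [hconj, re_conjTranspose_mul_diagonal_mul_apply_self]
    _ = ∑ m, d m * hA.eigenvalues m := by
        simp only [d, sum_mul, mul_comm (hA.eigenvalues _)]
        exact sum_comm
    _ ≤ ∑ i ∈ S, hA.eigenvalues i :=
        sum_mul_le_sum_of_forall_le S hA.eigenvalues d hS hd0 hd1 hsum

end KyFan

-- The indices of the `k` largest entries of a sorted tuple; all of `Fin n` once `k ≥ n`.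
def topIndices (n k : ℕ) : Finset (Fin n) :=
  univ.filter fun j => n - k ≤ (j : ℕ)

theorem apply_le_of_mem_map_sort_topIndices {α : Type*} [LinearOrder α] {n : ℕ} (f : Fin n → α)
    (k : ℕ) :
    ∀ p ∈ (topIndices n k).map (Tuple.sort f).toEmbedding,
      ∀ q ∉ (topIndices n k).map (Tuple.sort f).toEmbedding, f q ≤ f p := by
  intro p hp q hq
  obtain ⟨p', hp', rfl⟩ := mem_map.1 hp
  set q' := (Tuple.sort f).symm q
  have hq' : q' ∉ topIndices n k := fun h => hq (mem_map.2 ⟨q', h, by simp [q']⟩)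
  have hle : q' ≤ p' := by
    simp only [topIndices, mem_filter, mem_univ, true_and, not_le] at hp' hq'
    exact Fin.le_iff_val_le_val.2 (by omega)
  simpa [q'] using Tuple.monotone_sort f hle

theorem sum_re_conj_apply_self_le_sum_sortedEigenvalues {n : ℕ} {A : Matrix (Fin n) (Fin n) ℂ}
    (hA : A.IsHermitian) {V : Matrix (Fin n) (Fin n) ℂ} (hV : V ∈ unitaryGroup (Fin n) ℂ)
    (k : ℕ) {T : Finset (Fin n)} (hT : #T = #(topIndices n k)) :
    ∑ i ∈ T, ((Vᴴ * A * V) i i).re ≤ ∑ j ∈ topIndices n k, sortedEigenvalues hA j := by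
  have h := sum_re_conj_apply_self_le_sum_eigenvalues hA hV
    (apply_le_of_mem_map_sort_topIndices hA.eigenvalues k) (hT.trans (card_map _).symm)
  rwa [sum_map] at h

theorem sum_largest_eigenvalues_add_le_general {n : ℕ}
    (A B : Matrix (Fin n) (Fin n) ℂ) (hA : A.IsHermitian) (hB : B.IsHermitian)
    (k : ℕ) :
    ∑ j ∈ Finset.univ.filter (fun j : Fin n => n - k ≤ (j : ℕ)),
        sortedEigenvalues (hA.add hB) j ≤
      ∑ j ∈ Finset.univ.filter (fun j : Fin n => n - k ≤ (j : ℕ)),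
        (sortedEigenvalues hA j + sortedEigenvalues hB j) := by
  set hC := hA.add hB
  set U := (hC.eigenvectorUnitary : Matrix (Fin n) (Fin n) ℂ)
  have hU : U ∈ unitaryGroup (Fin n) ℂ := hC.eigenvectorUnitary.2
  have hdiag : Uᴴ * (A + B) * U = diagonal (RCLike.ofReal ∘ hC.eigenvalues) :=
    (Unitary.conjStarAlgAut_star_apply _ _).symm.trans hC.conjStarAlgAut_star_eigenvectorUnitary
  set T := (topIndices n k).map (Tuple.sort hC.eigenvalues).toEmbedding
  have hT : #T = #(topIndices n k) := card_map _
  calc ∑ j ∈ topIndices n k, sortedEigenvalues hC j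
      = ∑ i ∈ T, ((Uᴴ * (A + B) * U) i i).re := by
        simp [T, sortedEigenvalues, hdiag]
    _ = ∑ i ∈ T, ((Uᴴ * A * U) i i).re + ∑ i ∈ T, ((Uᴴ * B * U) i i).re := by
        simp only [Matrix.mul_add, Matrix.add_mul, Matrix.add_apply, Complex.add_re,
          sum_add_distrib]
    _ ≤ ∑ j ∈ topIndices n k, sortedEigenvalues hA j +
          ∑ j ∈ topIndices n k, sortedEigenvalues hB j :=
        add_le_add (sum_re_conj_apply_self_le_sum_sortedEigenvalues hA hU k hT)
          (sum_re_conj_apply_self_le_sum_sortedEigenvalues hB hU k hT)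
    _ = _ := sum_add_distrib.symm

/-- For Hermitian matrices `A`, `B`, the sum of the `k` largest eigenvalues of `A + B`
is at most the sum of the `k` largest eigenvalues of `A` plus that of `B`. -/
theorem sum_largest_eigenvalues_add_le {n : ℕ} (hn : 1 ≤ n)
    (A B : Matrix (Fin n) (Fin n) ℂ) (hA : A.IsHermitian) (hB : B.IsHermitian)
    (k : ℕ) (hk1 : 1 ≤ k) (hk2 : k ≤ n) :
    ∑ j ∈ Finset.univ.filter (fun j : Fin n => n - k ≤ (j : ℕ)),
        sortedEigenvalues (hA.add hB) j ≤
      ∑ j ∈ Finset.univ.filter (fun j : Fin n => n - k ≤ (j : ℕ)),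
        (sortedEigenvalues hA j + sortedEigenvalues hB j) :=
  sum_largest_eigenvalues_add_le_general A B hA hB k
end

section
/- Let N ≥ 1 be an integer and let a₁ ≤ a₂ ≤ ⋯ ≤ a_N be real numbers with ∑_{i=1}^{N} a_i = 0. Then for every integer k with 1 ≤ k ≤ N, ∑_{i=1}^{k} a_i ≥ −√(k(N−k)/N) · (∑_{i=1}^{N} a_i²)^{1/2}. -/
/-- If `a₁ ≤ ⋯ ≤ a_N` are real numbers summing to zero, then for every `1 ≤ k ≤ N`,
`∑_{i=1}^{k} a_i ≥ −√(k(N−k)/N) · (∑_{i=1}^{N} a_i²)^{1/2}`. -/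
theorem sum_smallest_ge_of_sum_eq_zero {N : ℕ} (hN : 1 ≤ N) (a : Fin N → ℝ)
    (ha : Monotone a) (hsum : ∑ i, a i = 0) (k : ℕ) (hk1 : 1 ≤ k) (hk2 : k ≤ N) :
    ∑ i ∈ Finset.univ.filter (fun i : Fin N => (i : ℕ) < k), a i ≥
      -Real.sqrt ((k : ℝ) * ((N : ℝ) - k) / N) * Real.sqrt (∑ i, (a i) ^ 2) := by
  have hN0 : (0:ℝ) < (N:ℝ) := by exact_mod_cast hN
  set c : Fin N → ℝ := fun i => (if (i : ℕ) < k then (1:ℝ) else 0) - (k:ℝ)/N with hc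
  have hcard : (Finset.univ.filter (fun i : Fin N => (i : ℕ) < k)).card = k := by
    rw [Finset.card_filter]
    rw [Fin.sum_univ_eq_sum_range (fun i => if i < k then 1 else 0)]
    rw [← Finset.sum_filter]
    have : (Finset.range N).filter (· < k) = Finset.range k := by
      ext i; simp only [Finset.mem_filter, Finset.mem_range]; omega
    simp [this]
  have hcard' : (Finset.univ.filter (fun i : Fin N => ¬ (i : ℕ) < k)).card = N - k := by
    have := Finset.card_filter_add_card_filter_not
      (s := (Finset.univ : Finset (Fin N))) (p := fun i : Fin N => (i : ℕ) < k)
    simp only [Finset.card_univ, Fintype.card_fin] at this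
    omega
  -- the filtered sum equals ∑ a i * c i
  have hS : ∑ i ∈ Finset.univ.filter (fun i : Fin N => (i : ℕ) < k), a i
      = ∑ i, a i * c i := by
    simp only [hc, mul_sub, Finset.sum_sub_distrib, mul_ite, mul_one, mul_zero,
      ← Finset.sum_filter, ← Finset.sum_mul, hsum, zero_mul, sub_zero]
  -- sum of squares of c
  have hc2 : ∑ i, c i ^ 2 = (k : ℝ) * ((N : ℝ) - k) / N := by
    have h1 : ∀ i : Fin N, c i ^ 2
        = if (i : ℕ) < k then (1 - (k:ℝ)/N)^2 else ((k:ℝ)/N)^2 := by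
      intro i
      simp only [hc]
      split <;> ring
    rw [Finset.sum_congr rfl (fun i _ => h1 i), Finset.sum_ite,
      Finset.sum_const, Finset.sum_const, hcard, hcard', nsmul_eq_mul, nsmul_eq_mul]
    have hNk : ((N - k : ℕ) : ℝ) = (N : ℝ) - k := by
      push_cast [hk2]; ring
    rw [hNk]
    field_simp
    ring
  have hc2nn : (0:ℝ) ≤ ∑ i, c i ^ 2 := Finset.sum_nonneg fun i _ => sq_nonneg _
  have ha2nn : (0:ℝ) ≤ ∑ i, (a i) ^ 2 := Finset.sum_nonneg fun i _ => sq_nonneg _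
  have hCS : (∑ i, a i * c i) ^ 2 ≤ (∑ i, c i ^ 2) * ∑ i, (a i) ^ 2 := by
    have := Finset.sum_mul_sq_le_sq_mul_sq Finset.univ c a
    simpa [mul_comm] using this
  have habs : |∑ i, a i * c i| ≤ Real.sqrt (∑ i, c i ^ 2) * Real.sqrt (∑ i, (a i) ^ 2) := by
    rw [← Real.sqrt_sq_eq_abs, ← Real.sqrt_mul hc2nn]
    exact Real.sqrt_le_sqrt hCS
  rw [hS, ge_iff_le, neg_mul, ← hc2, ← Real.sqrt_mul hc2nn, neg_le]
  calc -(∑ i, a i * c i) ≤ |∑ i, a i * c i| := neg_le_abs _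
    _ ≤ _ := by rw [Real.sqrt_mul hc2nn]; exact habs
end

section
/- Let N ≥ 2 be an integer, let 1 ≤ k ≤ N−1, and let a₁ ≤ a₂ ≤ ⋯ ≤ a_N be real numbers with ∑_{i=1}^{N} a_i = 0. Then equality ∑_{i=1}^{k} a_i = −√(k(N−k)/N) · (∑_{i=1}^{N} a_i²)^{1/2} holds if and only if there exists a real number c ≥ 0 such that a_i = −(N−k)c for all 1 ≤ i ≤ k and a_i = kc for all k+1 ≤ i ≤ N. -/
/-- Equality case: for `a₁ ≤ ⋯ ≤ a_N` summing to zero and `1 ≤ k ≤ N−1`,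
`∑_{i=1}^{k} a_i = −√(k(N−k)/N) · (∑ a_i²)^{1/2}` holds iff there is `c ≥ 0` with
`a_i = −(N−k)c` for `i ≤ k` and `a_i = kc` for `i > k`. -/
theorem sum_smallest_eq_iff {N : ℕ} (hN : 2 ≤ N) (k : ℕ) (hk1 : 1 ≤ k) (hk2 : k ≤ N - 1)
    (a : Fin N → ℝ) (ha : Monotone a) (hsum : ∑ i, a i = 0) :
    (∑ i ∈ Finset.univ.filter (fun i : Fin N => (i : ℕ) < k), a i =
        -Real.sqrt ((k : ℝ) * ((N : ℝ) - k) / N) * Real.sqrt (∑ i, (a i) ^ 2)) ↔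
      ∃ c : ℝ, 0 ≤ c ∧
        (∀ i : Fin N, (i : ℕ) < k → a i = -((N : ℝ) - k) * c) ∧
        (∀ i : Fin N, k ≤ (i : ℕ) → a i = (k : ℝ) * c) := by
  have hkN : k ≤ N := le_trans hk2 (Nat.sub_le N 1)
  have hkN' : k + 1 ≤ N := by omega
  have hRk : (1 : ℝ) ≤ (k : ℝ) := by exact_mod_cast hk1
  have hRNk : (1 : ℝ) ≤ (N : ℝ) - k := by
    have : ((k : ℝ) + 1) ≤ (N : ℝ) := by exact_mod_cast hkN'
    linarith
  have hRN : (0 : ℝ) < (N : ℝ) := by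
    have : (2 : ℝ) ≤ (N : ℝ) := by exact_mod_cast hN
    linarith
  have hRN0 : (N : ℝ) ≠ 0 := ne_of_gt hRN
  have hprod : (0 : ℝ) ≤ (k : ℝ) * ((N : ℝ) - k) / N := by
    apply div_nonneg _ (le_of_lt hRN)
    nlinarith
  have hprodpos : (0 : ℝ) < (k : ℝ) * ((N : ℝ) - k) / N := by
    apply div_pos _ hRN
    nlinarith
  set F := Finset.univ.filter (fun i : Fin N => (i : ℕ) < k) with hFdef
  set G := Finset.univ.filter (fun i : Fin N => ¬ (i : ℕ) < k) with hGdef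
  have hcardF : F.card = k := by
    have : F = Finset.map (Fin.castLEEmb hkN) Finset.univ := by
      ext i
      simp only [hFdef, Finset.mem_filter, Finset.mem_univ, true_and, Finset.mem_map,
        Fin.castLEEmb_apply]
      constructor
      · intro hi; exact ⟨⟨i, hi⟩, Fin.ext rfl⟩
      · rintro ⟨j, rfl⟩; exact j.isLt
    rw [this, Finset.card_map, Finset.card_univ, Fintype.card_fin]
  have hcardG : G.card = N - k := by
    have := Finset.card_filter_add_card_filter_not
      (s := (Finset.univ : Finset (Fin N))) (p := fun i : Fin N => (i : ℕ) < k)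
    rw [← hFdef, ← hGdef] at this
    rw [Finset.card_univ, Fintype.card_fin] at this
    omega
  have hRcardG : ((G.card : ℝ)) = (N : ℝ) - k := by
    rw [hcardG]; push_cast [Nat.cast_sub hkN]; ring
  have hsplit : ∀ f : Fin N → ℝ, ∑ i, f i = ∑ i ∈ F, f i + ∑ i ∈ G, f i := by
    intro f
    rw [hFdef, hGdef, Finset.sum_filter_add_sum_filter_not]
  have hmemF : ∀ i : Fin N, i ∈ F ↔ (i : ℕ) < k := by
    intro i; simp [hFdef]
  have hmemG : ∀ i : Fin N, i ∈ G ↔ k ≤ (i : ℕ) := by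
    intro i; simp [hGdef]
  -- weight vector
  set w : Fin N → ℝ := fun i => if (i : ℕ) < k then -(((N : ℝ) - k) / N) else (k : ℝ) / N
    with hwdef
  have hwF : ∀ i : Fin N, (i : ℕ) < k → w i = -(((N : ℝ) - k) / N) := by
    intro i hi
    simp only [hwdef]
    rw [if_pos hi]
  have hwG : ∀ i : Fin N, k ≤ (i : ℕ) → w i = (k : ℝ) / N := by
    intro i hi
    simp only [hwdef]
    rw [if_neg (Nat.not_lt.2 hi)]
  have hw2 : ∑ i, (w i) ^ 2 = (k : ℝ) * ((N : ℝ) - k) / N := by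
    rw [hsplit]
    have eF : ∑ i ∈ F, (w i) ^ 2 = ∑ _i ∈ F, (-(((N : ℝ) - k) / N)) ^ 2 :=
      Finset.sum_congr rfl fun i hi => by rw [hwF i ((hmemF i).1 hi)]
    have eG : ∑ i ∈ G, (w i) ^ 2 = ∑ _i ∈ G, ((k : ℝ) / N) ^ 2 :=
      Finset.sum_congr rfl fun i hi => by rw [hwG i ((hmemG i).1 hi)]
    rw [eF, eG, Finset.sum_const, Finset.sum_const, hcardF, nsmul_eq_mul, nsmul_eq_mul,
      hRcardG]
    field_simp
    ring
  have hGsum : ∑ i ∈ G, a i = -∑ i ∈ F, a i := by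
    have := hsplit a
    rw [hsum] at this
    linarith
  have hwa : ∑ i, w i * a i = -∑ i ∈ F, a i := by
    rw [hsplit]
    have eF : ∑ i ∈ F, w i * a i = ∑ i ∈ F, -(((N : ℝ) - k) / N) * a i :=
      Finset.sum_congr rfl fun i hi => by rw [hwF i ((hmemF i).1 hi)]
    have eG : ∑ i ∈ G, w i * a i = ∑ i ∈ G, ((k : ℝ) / N) * a i :=
      Finset.sum_congr rfl fun i hi => by rw [hwG i ((hmemG i).1 hi)]
    rw [eF, eG, ← Finset.mul_sum, ← Finset.mul_sum, hGsum]
    field_simp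
    ring
  constructor
  · intro heq
    set A := Real.sqrt (∑ i, (a i) ^ 2) with hAdef
    set W := Real.sqrt ((k : ℝ) * ((N : ℝ) - k) / N) with hWdef
    have hA0 : 0 ≤ A := Real.sqrt_nonneg _
    have hsqnn : 0 ≤ ∑ i, (a i) ^ 2 := Finset.sum_nonneg fun i _ => sq_nonneg _
    have hA2 : A ^ 2 = ∑ i, (a i) ^ 2 := Real.sq_sqrt hsqnn
    have hWpos : 0 < W := by
      rw [hWdef]
      exact Real.sqrt_pos.2 hprodpos
    have hW2 : W ^ 2 = (k : ℝ) * ((N : ℝ) - k) / N := by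
      rw [hWdef]; exact Real.sq_sqrt hprod
    have hzero : ∑ i, (A * w i - W * a i) ^ 2 = 0 := by
      have expand : ∑ i, (A * w i - W * a i) ^ 2
          = A ^ 2 * (∑ i, (w i) ^ 2) - 2 * A * W * (∑ i, w i * a i)
            + W ^ 2 * (∑ i, (a i) ^ 2) := by
        rw [Finset.mul_sum, Finset.mul_sum, Finset.mul_sum, ← Finset.sum_sub_distrib,
          ← Finset.sum_add_distrib]
        exact Finset.sum_congr rfl fun i _ => by ring
      rw [expand, hw2, hwa, heq, ← hA2, ← hW2]
      ring
    have hterm : ∀ i : Fin N, A * w i = W * a i := by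
      intro i
      have h := (Finset.sum_eq_zero_iff_of_nonneg
        (fun i _ => sq_nonneg (A * w i - W * a i))).1 hzero i (Finset.mem_univ i)
      have h2 := pow_eq_zero_iff (n := 2) (by norm_num) |>.1 h
      linarith
    by_cases hA : A = 0
    · have hsq0 : ∑ i, (a i) ^ 2 = 0 := by rw [← hA2, hA]; ring
      have hai : ∀ i : Fin N, a i = 0 := by
        intro i
        have h := (Finset.sum_eq_zero_iff_of_nonneg
          (fun i _ => sq_nonneg (a i))).1 hsq0 i (Finset.mem_univ i)
        exact pow_eq_zero_iff (n := 2) (by norm_num) |>.1 h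
      exact ⟨0, le_refl 0, fun i _ => by rw [hai i]; ring, fun i _ => by rw [hai i]; ring⟩
    · have hApos : 0 < A := lt_of_le_of_ne hA0 (Ne.symm hA)
      have hW0 : W ≠ 0 := ne_of_gt hWpos
      refine ⟨A / (W * N), div_nonneg hA0 (mul_nonneg (le_of_lt hWpos) (le_of_lt hRN)),
        ?_, ?_⟩
      · intro i hi
        have h1 := hterm i
        rw [hwF i hi] at h1
        field_simp at h1 ⊢
        linarith
      · intro i hi
        have h1 := hterm i
        rw [hwG i hi] at h1
        field_simp at h1 ⊢
        linarith
  · rintro ⟨c, hc0, h1, h2⟩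
    have hFa : ∑ i ∈ F, a i = -((k : ℝ) * ((N : ℝ) - k) * c) := by
      have eF : ∑ i ∈ F, a i = ∑ _i ∈ F, (-((N : ℝ) - k) * c) :=
        Finset.sum_congr rfl fun i hi => h1 i ((hmemF i).1 hi)
      rw [eF, Finset.sum_const, hcardF, nsmul_eq_mul]
      ring
    have hsq : ∑ i, (a i) ^ 2 = (k : ℝ) * ((N : ℝ) - k) * (N : ℝ) * c ^ 2 := by
      rw [hsplit]
      have eF : ∑ i ∈ F, (a i) ^ 2 = ∑ _i ∈ F, (-((N : ℝ) - k) * c) ^ 2 :=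
        Finset.sum_congr rfl fun i hi => by rw [h1 i ((hmemF i).1 hi)]
      have eG : ∑ i ∈ G, (a i) ^ 2 = ∑ _i ∈ G, ((k : ℝ) * c) ^ 2 :=
        Finset.sum_congr rfl fun i hi => by rw [h2 i ((hmemG i).1 hi)]
      rw [eF, eG, Finset.sum_const, Finset.sum_const, hcardF, nsmul_eq_mul, nsmul_eq_mul,
        hRcardG]
      ring
    rw [hFa, hsq, neg_mul, ← Real.sqrt_mul hprod]
    have harg : (k : ℝ) * ((N : ℝ) - k) / N * ((k : ℝ) * ((N : ℝ) - k) * (N : ℝ) * c ^ 2)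
        = ((k : ℝ) * ((N : ℝ) - k) * c) ^ 2 := by
      field_simp
    have hnn : 0 ≤ (k : ℝ) * ((N : ℝ) - k) * c :=
      mul_nonneg (mul_nonneg (by linarith) (by linarith)) hc0
    rw [harg, Real.sqrt_sq hnn]
end

section
/- Let N ≥ 1 be an integer and let a₁ ≤ a₂ ≤ ⋯ ≤ a_N be real numbers with ∑_{i=1}^{N} a_i = 0. Then for every integer k with 1 ≤ k ≤ N, the sum of the k largest terms satisfies ∑_{i=N−k+1}^{N} a_i ≤ √(k(N−k)/N) · (∑_{i=1}^{N} a_i²)^{1/2}. -/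
/-- If `a₁ ≤ ⋯ ≤ a_N` are real numbers summing to zero, then for every `1 ≤ k ≤ N`,
the sum of the `k` largest terms satisfies
`∑_{i=N−k+1}^{N} a_i ≤ √(k(N−k)/N) · (∑_{i=1}^{N} a_i²)^{1/2}`. -/
theorem sum_largest_le_of_sum_eq_zero {N : ℕ} (hN : 1 ≤ N) (a : Fin N → ℝ)
    (ha : Monotone a) (hsum : ∑ i, a i = 0) (k : ℕ) (hk1 : 1 ≤ k) (hk2 : k ≤ N) :
    ∑ i ∈ Finset.univ.filter (fun i : Fin N => N - k ≤ (i : ℕ)), a i ≤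
      Real.sqrt ((k : ℝ) * ((N : ℝ) - k) / N) * Real.sqrt (∑ i, (a i) ^ 2) := by
  classical
  have hN0 : (0:ℝ) < N := by exact_mod_cast Nat.lt_of_lt_of_le Nat.zero_lt_one hN
  set s : Finset (Fin N) := Finset.univ.filter (fun i : Fin N => N - k ≤ (i : ℕ)) with hs
  set b : Fin N → ℝ := fun i => if N - k ≤ (i : ℕ) then ((N:ℝ)-k)/N else -(k/N) with hbdef
  -- cardinality of s
  have hcard : s.card = k := by
    rw [hs, Finset.card_filter,
      Fin.sum_univ_eq_sum_range (fun x => if N - k ≤ x then 1 else 0) N, ← Finset.card_filter]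
    have : (Finset.range N).filter (fun x => N - k ≤ x) = Finset.Ico (N - k) N := by
      ext x; simp only [Finset.mem_filter, Finset.mem_range, Finset.mem_Ico]; omega
    rw [this, Nat.card_Ico]
    omega
  have hcardc : sᶜ.card = N - k := by
    rw [Finset.card_compl, hcard]; simp
  -- sum of a over s and complement
  have hsplit : ∑ i ∈ s, a i + ∑ i ∈ sᶜ, a i = 0 := by
    rw [Finset.sum_add_sum_compl]; exact hsum
  -- ∑ b i * a i = ∑ i in s, a i
  have hba : ∑ i, b i * a i = ∑ i ∈ s, a i := by
    rw [← Finset.sum_add_sum_compl s]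
    have h1 : ∑ i ∈ s, b i * a i = (((N:ℝ)-k)/N) * ∑ i ∈ s, a i := by
      rw [Finset.mul_sum]
      refine Finset.sum_congr rfl fun i hi => ?_
      rw [hs] at hi; simp only [Finset.mem_filter] at hi
      simp only [hbdef]; rw [if_pos hi.2]
    have h2 : ∑ i ∈ sᶜ, b i * a i = (-(k/N) : ℝ) * ∑ i ∈ sᶜ, a i := by
      rw [Finset.mul_sum]
      refine Finset.sum_congr rfl fun i hi => ?_
      rw [Finset.mem_compl, hs] at hi; simp only [Finset.mem_filter, Finset.mem_univ,
        true_and, not_le] at hi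
      simp only [hbdef]; rw [if_neg (Nat.not_le.2 hi)]
    have hT : ∑ i ∈ sᶜ, a i = -∑ i ∈ s, a i := by linarith
    rw [h1, h2, hT]
    field_simp
    ring
  -- ∑ b i ^ 2 = k (N - k) / N
  have hb2 : ∑ i, b i ^ 2 = (k : ℝ) * ((N : ℝ) - k) / N := by
    rw [← Finset.sum_add_sum_compl s]
    have h1 : ∑ i ∈ s, b i ^ 2 = (k : ℝ) * (((N:ℝ)-k)/N)^2 := by
      rw [Finset.sum_congr rfl (fun i hi => ?_), Finset.sum_const, hcard, nsmul_eq_mul]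
      rw [hs] at hi; simp only [Finset.mem_filter] at hi
      simp only [hbdef]; rw [if_pos hi.2]
    have h2 : ∑ i ∈ sᶜ, b i ^ 2 = ((N : ℝ) - k) * ((k:ℝ)/N)^2 := by
      rw [Finset.sum_congr rfl (fun i hi => ?_), Finset.sum_const, hcardc, nsmul_eq_mul]
      · congr 1
        push_cast [Nat.cast_sub hk2]
        ring
      rw [Finset.mem_compl, hs] at hi; simp only [Finset.mem_filter, Finset.mem_univ,
        true_and, not_le] at hi
      simp only [hbdef]; rw [if_neg (Nat.not_le.2 hi), neg_pow]
      simp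
    rw [h1, h2]
    field_simp
    ring
  calc ∑ i ∈ s, a i = ∑ i, b i * a i := hba.symm
    _ ≤ Real.sqrt (∑ i, b i ^ 2) * Real.sqrt (∑ i, a i ^ 2) :=
        Real.sum_mul_le_sqrt_mul_sqrt _ _ _
    _ = Real.sqrt ((k : ℝ) * ((N : ℝ) - k) / N) * Real.sqrt (∑ i, (a i) ^ 2) := by rw [hb2]
end

section
/- Let N ≥ 1 be an integer, let a : {1, …, N} → ℝ satisfy ∑_{i=1}^{N} a_i = 0, and let S ⊆ {1, …, N} be a subset of cardinality k. Then (∑_{i∈S} a_i)² ≤ (k(N−k)/N) · ∑_{i=1}^{N} a_i². -/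
/-- If `a₁, …, a_N` are real numbers summing to zero and `S` is a subset of the index set
with `k` elements, then `(∑_{i∈S} a_i)² ≤ (k(N−k)/N) · ∑_{i=1}^{N} a_i²`. -/
theorem sq_sum_subset_le {N : ℕ} (hN : 1 ≤ N) (a : Fin N → ℝ)
    (hsum : ∑ i, a i = 0) (S : Finset (Fin N)) (k : ℕ) (hk : S.card = k) :
    (∑ i ∈ S, a i) ^ 2 ≤ ((k : ℝ) * ((N : ℝ) - k) / N) * ∑ i, (a i) ^ 2 := by
  have hkN : k ≤ N := hk ▸ (S.card_le_univ.trans_eq (by simp))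
  have hTc : ∑ i ∈ Sᶜ, a i = -∑ i ∈ S, a i := by
    have := Finset.sum_add_sum_compl S a
    rw [hsum] at this; linarith
  have h1 : (∑ i ∈ S, a i) ^ 2 ≤ (k : ℝ) * ∑ i ∈ S, a i ^ 2 := by
    have := sq_sum_le_card_mul_sum_sq (s := S) (f := a)
    rwa [hk] at this
  have h2 : (∑ i ∈ S, a i) ^ 2 ≤ ((N : ℝ) - k) * ∑ i ∈ Sᶜ, a i ^ 2 := by
    have := sq_sum_le_card_mul_sum_sq (s := Sᶜ) (f := a)
    rw [hTc, neg_pow, Finset.card_compl, Fintype.card_fin, hk] at this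
    have hcast : ((N - k : ℕ) : ℝ) = (N : ℝ) - k := by
      push_cast [hkN]; ring
    simpa [hcast] using this
  have hsplit : ∑ i, a i ^ 2 = ∑ i ∈ S, a i ^ 2 + ∑ i ∈ Sᶜ, a i ^ 2 :=
    (Finset.sum_add_sum_compl S _).symm
  have hk0 : (0 : ℝ) ≤ k := Nat.cast_nonneg k
  have hNk0 : (0 : ℝ) ≤ (N : ℝ) - k := by
    have := (Nat.cast_le (α := ℝ)).mpr hkN; linarith
  have hNpos : (0 : ℝ) < N := by exact_mod_cast hN
  rw [div_mul_eq_mul_div, le_div_iff₀ hNpos]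
  have h3 := mul_le_mul_of_nonneg_left h1 hNk0
  have h4 := mul_le_mul_of_nonneg_left h2 hk0
  have hN' : (N : ℝ) = ((N : ℝ) - k) + k := by ring
  rw [hsplit]; nlinarith [h3, h4]
end
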